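/- The generating function identity: the sum over n ≥ 0 of P(n,1) q^n equals (-q;q)_∞ · ∑_{k≥1} q^{2k}/(1+q^k). -/

import Mathlib

/-!
Conjugation `X ↦ (#{a ∈ X | j ≤ a})_{1 ≤ j ≤ max X}` is an involution on partitions that
preserves the size. Since consecutive entries of the conjugate agree exactly at the missing
integers `j`, the number of missing integers of `π` is the number of repetitions among the parts
of its conjugate. So the partitions with one missing integer are the conjugates of the partitions
`k + 1, k + 1, {i + 1 | i ∈ S}` with `S` a finite set not containing `k`, whose generating
function is `∑ₖ q^(2(k+1)) ∏_{i ≠ k} (1 + q^(i+1)) = (-q;q)_∞ ∑ₖ q^(2(k+1)) / (1 + q^(k+1))`.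
-/

/-- The number of missing integers of a partition: positive integers less than
the largest part which do not occur as a part. -/
def missingCount {n : ℕ} (π : n.Partition) : ℕ :=
  ((Finset.Ico 1 π.parts.sup).filter (fun j => j ∉ π.parts)).card

/-- `Pcount n m` is the number of partitions of `n` with exactly `m` missing integers. -/
def Pcount (n m : ℕ) : ℕ := Fintype.card {π : n.Partition // missingCount π = m}

theorem Antitone.card_image_range_add_card_filter_eq {β : Type*} [PartialOrder β] [DecidableEq β]
    {g : ℕ → β} (hg : Antitone g) (L : ℕ) :
    ((Finset.range L).image g).card + ((Finset.Ico 1 L).filter fun j => g (j - 1) = g j).card =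
      L := by
  induction L with
  | zero => simp
  | succ L ih =>
    rcases eq_or_ne L 0 with rfl | hL
    · simp
    rw [Finset.range_add_one, Finset.image_insert, ← Nat.succ_eq_add_one,
      Nat.Ico_succ_right_eq_insert_Ico (Nat.one_le_iff_ne_zero.2 hL), Finset.filter_insert]
    by_cases htie : g (L - 1) = g L
    · have hmem : g L ∈ (Finset.range L).image g :=
        Finset.mem_image.2 ⟨L - 1, Finset.mem_range.2 (by omega), htie⟩
      rw [Finset.insert_eq_of_mem hmem, if_pos htie, Finset.card_insert_of_notMem (by simp)]
      omega
    · have hnot : g L ∉ (Finset.range L).image g := by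
        simp only [Finset.mem_image, Finset.mem_range, not_exists, not_and]
        intro j hj hjL
        exact htie (le_antisymm (hjL ▸ hg (Nat.le_sub_one_of_lt hj)) (hg (Nat.sub_le L 1)))
      rw [Finset.card_insert_of_notMem hnot, if_neg htie]
      omega

namespace Multiset

def countGE (X : Multiset ℕ) (j : ℕ) : ℕ := X.countP (j ≤ ·)

def conjugate (X : Multiset ℕ) : Multiset ℕ := (range X.sup).map fun j => X.countGE (j + 1)

variable (X : Multiset ℕ)

theorem countGE_antitone : Antitone X.countGE := fun _ _ hij => by
  simp only [countGE, countP_eq_card_filter]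
  exact card_le_card (monotone_filter_right X fun _ => hij.trans)

theorem countGE_eq_count_add_countGE_succ (j : ℕ) :
    X.countGE j = X.count j + X.countGE (j + 1) := by
  induction X using Multiset.induction with
  | empty => rfl
  | cons a X ih =>
    simp only [countGE, countP_cons, count_cons] at ih ⊢
    split_ifs <;> omega

theorem countGE_pos_iff {j : ℕ} (hj : j ≠ 0) : 0 < X.countGE j ↔ j ≤ X.sup := by
  simp only [countGE, countP_pos]
  refine ⟨fun ⟨a, ha, hja⟩ => hja.trans (le_sup ha), fun h => ?_⟩
  by_contra! hc
  have : X.sup ≤ j - 1 := sup_le.2 fun a ha => Nat.le_sub_one_of_lt (hc a ha)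
  omega

theorem sum_range_countGE_succ {N : ℕ} (hN : ∀ a ∈ X, a ≤ N) :
    ∑ j ∈ Finset.range N, X.countGE (j + 1) = X.sum := by
  induction X using Multiset.induction with
  | empty => simp [countGE]
  | cons a X ih =>
    have hrange : (Finset.range N).filter (· + 1 ≤ a) = Finset.range a := by
      ext j
      have := hN a (mem_cons_self a X)
      simp only [Finset.mem_filter, Finset.mem_range]
      omega
    simp only [countGE, countP_cons, Finset.sum_add_distrib, sum_cons] at ih ⊢
    rw [ih fun b hb => hN b (mem_cons_of_mem hb), Finset.sum_boole, hrange]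
    simp [add_comm]

theorem card_conjugate : card X.conjugate = X.sup := by simp [conjugate]

theorem sum_conjugate : X.conjugate.sum = X.sum := by
  simpa [conjugate, Finset.sum] using X.sum_range_countGE_succ fun _ ha => le_sup ha

theorem pos_of_mem_conjugate {b : ℕ} (hb : b ∈ X.conjugate) : 0 < b := by
  obtain ⟨j, hj, rfl⟩ := mem_map.1 hb
  exact (X.countGE_pos_iff j.succ_ne_zero).2 (mem_range.1 hj)

theorem countGE_conjugate (v : ℕ) :
    X.conjugate.countGE v = ((Finset.range X.sup).filter fun j => v ≤ X.countGE (j + 1)).card := by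
  rw [conjugate, countGE, countP_map, Finset.card_def, Finset.filter_val, Finset.range_val]

theorem le_countGE_conjugate_iff {j v : ℕ} (hj : j ≠ 0) (hv : v ≠ 0) :
    j ≤ X.conjugate.countGE v ↔ v ≤ X.countGE j := by
  rw [countGE_conjugate]
  constructor
  · intro h
    by_contra! hlt
    have hsub : (Finset.range X.sup).filter (fun i => v ≤ X.countGE (i + 1)) ⊆
        Finset.range (j - 1) := by
      intro i hi
      have hvi := (Finset.mem_filter.1 hi).2
      simp only [Finset.mem_range]
      by_contra! hji
      exact absurd (hvi.trans (X.countGE_antitone (by omega))) (not_le.2 hlt)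
    have := (Finset.card_le_card hsub).trans_eq (Finset.card_range _)
    omega
  · intro h
    have hjsup : j ≤ X.sup := (X.countGE_pos_iff hj).1 (by omega)
    calc j = (Finset.range j).card := (Finset.card_range j).symm
      _ ≤ _ := Finset.card_le_card fun i hi => by
        have hi := Finset.mem_range.1 hi
        exact Finset.mem_filter.2
          ⟨Finset.mem_range.2 (by omega), h.trans (X.countGE_antitone (by omega))⟩

theorem countGE_conjugate_conjugate {v : ℕ} (hv : v ≠ 0) :
    X.conjugate.conjugate.countGE v = X.countGE v := by
  refine eq_of_forall_le_iff fun j => ?_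
  rcases eq_or_ne j 0 with rfl | hj
  · simp
  rw [le_countGE_conjugate_iff _ hj hv, le_countGE_conjugate_iff _ hv hj]

theorem conjugate_conjugate (hX : ∀ a ∈ X, 0 < a) : X.conjugate.conjugate = X := by
  ext v
  rcases eq_or_ne v 0 with rfl | hv
  · rw [count_eq_zero.2 fun h => (pos_of_mem_conjugate _ h).false,
      count_eq_zero.2 fun h => (hX 0 h).false]
  have key (Y : Multiset ℕ) : Y.count v = Y.countGE v - Y.countGE (v + 1) := by
    rw [countGE_eq_count_add_countGE_succ Y v]; omega
  rw [key, key, countGE_conjugate_conjugate X hv, countGE_conjugate_conjugate X (by omega)]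

theorem eq_and_eq_of_cons_cons_eq {α : Type*} {a b : α} {D E : Multiset α} (hD : D.Nodup)
    (h : a ::ₘ a ::ₘ D = b ::ₘ b ::ₘ E) : a = b ∧ D = E := by
  classical
  obtain rfl : a = b := by
    by_contra hab
    have hcount := congrArg (count b) h
    rw [count_cons_of_ne (Ne.symm hab), count_cons_of_ne (Ne.symm hab), count_cons_self,
      count_cons_self] at hcount
    have := nodup_iff_count_le_one.1 hD b
    omega
  exact ⟨rfl, (cons_inj_right a).1 ((cons_inj_right a).1 h)⟩

theorem card_eq_card_toFinset_add_one_iff {α : Type*} [DecidableEq α] {Y : Multiset α} :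
    card Y = Y.toFinset.card + 1 ↔ ∃ a D, D.Nodup ∧ a ∉ D ∧ Y = a ::ₘ a ::ₘ D := by
  constructor
  · intro h
    have hle := dedup_le Y
    obtain ⟨a, ha⟩ : ∃ a, Y - Y.dedup = {a} := card_eq_one.1 <| by
      rw [card_sub hle, h, card_toFinset]; omega
    have haY : a ∈ Y.dedup :=
      mem_dedup.2 <| mem_of_le (Multiset.sub_le_self Y Y.dedup) (ha ▸ mem_singleton_self a)
    refine ⟨a, Y.dedup.erase a, (nodup_dedup Y).erase a, (nodup_dedup Y).notMem_erase, ?_⟩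
    rw [cons_erase haY, ← singleton_add, ← ha, tsub_add_cancel_of_le hle]
  · rintro ⟨a, D, hD, ha, rfl⟩
    rw [toFinset_cons, toFinset_cons, Finset.insert_idem, Finset.card_insert_of_notMem (by simpa),
      toFinset_card_of_nodup hD]
    simp

end Multiset

section

open Multiset

theorem missingCount_add_card_toFinset_conjugate {n : ℕ} (π : n.Partition) :
    missingCount π + π.parts.conjugate.toFinset.card = card π.parts.conjugate := by
  have hg : Antitone fun j => π.parts.countGE (j + 1) :=
    π.parts.countGE_antitone.comp_monotone fun _ _ h => Nat.succ_le_succ h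
  rw [card_conjugate, ← hg.card_image_range_add_card_filter_eq π.parts.sup, add_comm, missingCount,
    conjugate, toFinset_map, toFinset_range]
  congr 2
  refine Finset.filter_congr fun j hj => ?_
  have hj : j - 1 + 1 = j := Nat.sub_add_cancel (Finset.mem_Ico.1 hj).1
  rw [hj, countGE_eq_count_add_countGE_succ π.parts j, ← count_eq_zero]
  omega

def pairParts (k : ℕ) (S : Finset ℕ) : Multiset ℕ := (k + 1) ::ₘ (k + 1) ::ₘ S.val.map (· + 1)

theorem pos_of_mem_pairParts {k : ℕ} {S : Finset ℕ} {a : ℕ} (ha : a ∈ pairParts k S) : 0 < a := by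
  simp only [pairParts, mem_cons, mem_map, Finset.mem_val] at ha
  omega

theorem conjugate_conjugate_pairParts (k : ℕ) (S : Finset ℕ) :
    (pairParts k S).conjugate.conjugate = pairParts k S :=
  conjugate_conjugate _ fun _ => pos_of_mem_pairParts

theorem sum_pairParts (k : ℕ) (S : Finset ℕ) :
    (pairParts k S).sum = 2 * (k + 1) + ∑ i ∈ S, (i + 1) := by
  simp [pairParts, two_mul, add_assoc]

theorem nodup_map_succ (S : Finset ℕ) : (S.val.map (· + 1)).Nodup :=
  S.nodup.map <| add_left_injective 1

theorem pairParts_inj {k k' : ℕ} {S S' : Finset ℕ} (h : pairParts k S = pairParts k' S') :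
    k = k' ∧ S = S' := by
  obtain ⟨hk, hS⟩ := eq_and_eq_of_cons_cons_eq (nodup_map_succ S) h
  exact ⟨Nat.succ_injective hk, Finset.val_injective (map_injective (add_left_injective 1) hS)⟩

theorem card_pairParts {k : ℕ} {S : Finset ℕ} (hk : k ∉ S) :
    card (pairParts k S) = (pairParts k S).toFinset.card + 1 :=
  card_eq_card_toFinset_add_one_iff.2 ⟨_, _, nodup_map_succ S, by simpa using hk, rfl⟩

theorem exists_eq_pairParts {Y : Multiset ℕ} (hY : ∀ a ∈ Y, 0 < a)
    (h : card Y = Y.toFinset.card + 1) : ∃ k S, k ∉ S ∧ Y = pairParts k S := by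
  obtain ⟨a, D, hD, ha, rfl⟩ := card_eq_card_toFinset_add_one_iff.1 h
  have hpos : ∀ b ∈ D, 0 < b := fun b hb => hY b (mem_cons_of_mem (mem_cons_of_mem hb))
  have hD' : (D.map (· - 1)).Nodup :=
    hD.map_on fun x hx y hy hxy => by have := hpos x hx; have := hpos y hy; omega
  have ha0 : 0 < a := hY a (mem_cons_self a _)
  refine ⟨a - 1, ⟨_, hD'⟩, fun hmem => ha ?_, ?_⟩
  · obtain ⟨b, hb, hba⟩ := mem_map.1 hmem
    rwa [show a = b by have := hpos b hb; omega]
  · rw [pairParts, Nat.sub_add_cancel ha0, map_map]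
    congr 2
    conv_lhs => rw [← map_id D]
    exact map_congr rfl fun b hb => (Nat.sub_add_cancel (hpos b hb)).symm

def pairPartition (k : ℕ) (S : Finset ℕ) : (pairParts k S).sum.Partition where
  parts := (pairParts k S).conjugate
  parts_pos := pos_of_mem_conjugate _
  parts_sum := sum_conjugate _

theorem missingCount_pairPartition {k : ℕ} {S : Finset ℕ} (hk : k ∉ S) :
    missingCount (pairPartition k S) = 1 := by
  have h := missingCount_add_card_toFinset_conjugate (pairPartition k S)
  rw [show (pairPartition k S).parts.conjugate = pairParts k S from
    conjugate_conjugate_pairParts k S, card_pairParts hk] at h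
  omega

theorem exists_pairParts_eq_conjugate {n : ℕ} {π : n.Partition} (h : missingCount π = 1) :
    ∃ k S, k ∉ S ∧ pairParts k S = π.parts.conjugate := by
  have hcard := missingCount_add_card_toFinset_conjugate π
  obtain ⟨k, S, hk, hY⟩ :=
    exists_eq_pairParts (Y := π.parts.conjugate) (fun _ => pos_of_mem_conjugate _) (by omega)
  exact ⟨k, S, hk, hY.symm⟩

theorem Nat.Partition.sigma_ext {P : ∀ n, n.Partition → Prop}
    {x y : Σ n : ℕ, {π : n.Partition // P n π}} (h : x.2.1.parts = y.2.1.parts) : x = y := by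
  obtain ⟨n, π, hπ⟩ := x
  obtain ⟨m, σ, hσ⟩ := y
  obtain rfl : n = m := π.parts_sum.symm.trans (h ▸ σ.parts_sum)
  obtain rfl : π = σ := Nat.Partition.ext h
  rfl

noncomputable def pairEquiv :
    {p : ℕ × Finset ℕ // p.1 ∉ p.2} ≃ Σ n : ℕ, {π : n.Partition // missingCount π = 1} :=
  Equiv.ofBijective (fun p => ⟨_, pairPartition p.1.1 p.1.2, missingCount_pairPartition p.2⟩) <| by
    refine ⟨fun p p' h => ?_, fun ⟨n, π, hπ⟩ => ?_⟩
    · have hparts : (pairParts p.1.1 p.1.2).conjugate = (pairParts p'.1.1 p'.1.2).conjugate :=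
        congrArg (fun x => x.2.1.parts) h
      have hconj := congrArg conjugate hparts
      rw [conjugate_conjugate_pairParts, conjugate_conjugate_pairParts] at hconj
      obtain ⟨hk, hS⟩ := pairParts_inj hconj
      exact Subtype.ext (Prod.ext hk hS)
    · obtain ⟨k, S, hk, hkS⟩ := exists_pairParts_eq_conjugate hπ
      refine ⟨⟨(k, S), hk⟩, Nat.Partition.sigma_ext ?_⟩
      show (pairParts k S).conjugate = π.parts
      rw [hkS, conjugate_conjugate _ fun _ => π.parts_pos]

theorem pairEquiv_fst (p : {p : ℕ × Finset ℕ // p.1 ∉ p.2}) :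
    (pairEquiv p).1 = 2 * (p.1.1 + 1) + ∑ i ∈ p.1.2, (i + 1) :=
  sum_pairParts _ _

end

theorem tsum_finsetProd_ite_eq_tprod_div {ι K : Type*} [NormedField K] [CompleteSpace K]
    [DecidableEq ι] {f : ι → K} (hf : Summable fun i => ‖f i‖) (k : ι) (hk : 1 + f k ≠ 0) :
    ∑' S : Finset ι, ∏ i ∈ S, (if i = k then 0 else f i) = (∏' i, (1 + f i)) / (1 + f k) := by
  have hfk : Summable fun i => ‖if i = k then 0 else f i‖ :=
    hf.of_nonneg_of_le (fun _ => norm_nonneg _) fun i => by split_ifs <;> simp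
  have hupd : Function.update (fun i => 1 + f i) k 1 = fun i => 1 + if i = k then 0 else f i := by
    ext i; split_ifs with h <;> simp [h]
  have hmul : Multipliable (Function.update (fun i => 1 + f i) k 1) :=
    hupd ▸ multipliable_one_add_of_summable hfk
  rw [hmul.tprod_eq_mul_tprod_ite' k,
    mul_div_cancel_left₀ _ hk, ← tprod_one_add (summable_finsetProd_of_summable_norm hfk)]
  exact tprod_congr fun i => by split_ifs <;> simp

theorem summable_norm_pow_succ {z : ℂ} (hz : ‖z‖ < 1) : Summable fun k : ℕ => ‖z ^ (k + 1)‖ := by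
  simpa [norm_pow] using
    (summable_nat_add_iff 1).2 (summable_geometric_of_lt_one (norm_nonneg z) hz)

theorem one_add_pow_succ_ne_zero {z : ℂ} (hz : ‖z‖ < 1) (k : ℕ) : 1 + z ^ (k + 1) ≠ 0 := by
  intro h
  have h1 : ‖z ^ (k + 1)‖ = 1 := by rw [eq_neg_of_add_eq_zero_right h, norm_neg, norm_one]
  rw [norm_pow] at h1
  exact (pow_lt_one₀ (norm_nonneg z) hz k.succ_ne_zero).ne h1

theorem hasSum_pow_mul_prod_pow (q : ℂ) (hq : ‖q‖ < 1) :
    HasSum (fun p : {p : ℕ × Finset ℕ // p.1 ∉ p.2} =>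
        q ^ (2 * (p.1.1 + 1)) * ∏ i ∈ p.1.2, q ^ (i + 1))
      ((∏' k : ℕ, (1 + q ^ (k + 1))) * ∑' k : ℕ, q ^ (2 * (k + 1)) / (1 + q ^ (k + 1))) := by
  -- the factor `if i = k then 0 else _` kills the pairs with `k ∈ S`, so that the sum may run
  -- over all of `ℕ × Finset ℕ`, where it splits over `k`
  set term : ℕ × Finset ℕ → ℂ :=
    fun p => q ^ (2 * (p.1 + 1)) * ∏ i ∈ p.2, if i = p.1 then 0 else q ^ (i + 1)
  have hsupp : Function.support term ⊆ {p | p.1 ∉ p.2} := fun p hp hmem =>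
    hp <| mul_eq_zero_of_right _ <| Finset.prod_eq_zero hmem (if_pos rfl)
  have hterm (p : {p : ℕ × Finset ℕ // p.1 ∉ p.2}) :
      term p = q ^ (2 * (p.1.1 + 1)) * ∏ i ∈ p.1.2, q ^ (i + 1) :=
    congrArg (q ^ (2 * (p.1.1 + 1)) * ·) <|
      Finset.prod_congr rfl fun i hi => if_neg fun h : i = p.1.1 => p.2 (h ▸ hi)
  simp only [← hterm]
  refine (hasSum_subtype_iff_of_support_subset hsupp).2 ?_
  have hgeom := summable_norm_pow_succ hq
  have hsq : Summable fun k : ℕ => ‖q ^ (2 * (k + 1))‖ := by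
    simpa only [pow_mul] using summable_norm_pow_succ (z := q ^ 2) (by simpa using hq)
  have hsum : Summable term := by
    refine .of_norm_bounded (hsq.mul_of_nonneg (summable_finsetProd_of_summable_nonneg
      (fun _ => norm_nonneg _) hgeom) (fun _ => norm_nonneg _)
      fun _ => Finset.prod_nonneg fun _ _ => norm_nonneg _) fun p => ?_
    rw [norm_mul, norm_prod]
    gcongr with i
    split_ifs <;> simp
  convert hsum.hasSum using 1
  rw [hsum.tsum_prod, ← tsum_mul_left]
  refine tsum_congr fun k => ?_
  simp only [term]
  rw [tsum_mul_left, tsum_finsetProd_ite_eq_tprod_div hgeom k (one_add_pow_succ_ne_zero hq k)]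
  ring

theorem statement3 (q : ℂ) (hq : ‖q‖ < 1) :
    ∑' n : ℕ, (Pcount n 1 : ℂ) * q ^ n =
      (∏' k : ℕ, (1 + q ^ (k + 1))) * ∑' k : ℕ, q ^ (2 * (k + 1)) / (1 + q ^ (k + 1)) := by
  have hsigma : HasSum (fun x : Σ n : ℕ, {π : n.Partition // missingCount π = 1} => q ^ x.1)
      ((∏' k : ℕ, (1 + q ^ (k + 1))) * ∑' k : ℕ, q ^ (2 * (k + 1)) / (1 + q ^ (k + 1))) := by
    rw [← pairEquiv.hasSum_iff]
    convert hasSum_pow_mul_prod_pow q hq with p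
    rw [Function.comp_apply, pairEquiv_fst, pow_add, Finset.prod_pow_eq_pow_sum]
  refine (hsigma.sigma fun n => ?_).tsum_eq
  simpa [Pcount] using hasSum_fintype fun _ : {π : n.Partition // missingCount π = 1} => q ^ n
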